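/- Let a0, c, mu0, mu1 > 0, b ∈ ℝ, and σ > a0/(2c). Set E = 3·a0²·mu1² − 2·a0·b·mu1 − 4·a0·mu0 − b² + 4·a0 and assume E·(a0 − c·σ) > 0. Define B = (a0·mu1 − b)/(2·a0), ω = −(a0·mu1² − b·mu1 − mu0 + σ)·mu1, λ = √(E/(16·a0·(a0 − c·σ))), d2 = 3·√(2·c·σ − a0)·E/(8·√a0·(a0 − c·σ)), h2 = 3·E/(8·(a0 − c·σ)), and h0 = (6·a0²·c·mu1²·σ − 4·a0·b·c·mu1·σ − 8·a0·c·mu0·σ + 8·a0·c·σ² − 2·b²·c·σ − 8·a0²·σ + 8·a0²)/(8·a0·(c·σ − a0)). Then f(ξ) = d2·sech²(λ·ξ) and g(ξ) = h0 + h2·sech²(λ·ξ) satisfy the Schrödinger KdV–BBM associated ODE system with parameters a0, c, mu0, mu1, b, wave speed σ, and phase shifts B, ω. -/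

import Mathlib

/-!
Write `s = sech²(λξ)`. From `tanh² = 1 - s` one gets `s'' = λ²(4s - 6s²)` and hence
`s''' = λ²(4 - 12s)s'`, so for `f = d₂s`, `g = h₀ + h₂s` every equation of the system becomes
a polynomial in `s` (multiplied by `s'` in the first and third). Its coefficients vanish exactly
when `h₂ = 6a₀λ²`, `d₂² + h₂² = 12cσh₂λ²`, `h₀ + 4cσλ² = σ - 1`, together with the two
relations fixing `h₀ + 4a₀λ²` and `ω`; the choice of `B` makes `3a₀B + b = a₀(B + μ₁)`.
-/

open Real

noncomputable def sechSq (lam ξ : ℝ) : ℝ := (1 / cosh (lam * ξ)) ^ 2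

lemma hasDerivAt_cosh_mul (lam ξ : ℝ) :
    HasDerivAt (fun ξ => cosh (lam * ξ)) (sinh (lam * ξ) * lam) ξ :=
  (hasDerivAt_cosh _).comp ξ ((hasDerivAt_id ξ).const_mul lam |>.congr_deriv (mul_one lam))

lemma hasDerivAt_sinh_mul (lam ξ : ℝ) :
    HasDerivAt (fun ξ => sinh (lam * ξ)) (cosh (lam * ξ) * lam) ξ :=
  (hasDerivAt_sinh _).comp ξ ((hasDerivAt_id ξ).const_mul lam |>.congr_deriv (mul_one lam))

lemma hasDerivAt_sechSq (lam ξ : ℝ) :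
    HasDerivAt (sechSq lam) (-2 * lam * sinh (lam * ξ) / cosh (lam * ξ) ^ 3) ξ := by
  have hc := (cosh_pos (lam * ξ)).ne'
  refine (((hasDerivAt_const ξ 1).fun_div (hasDerivAt_cosh_mul lam ξ) hc).fun_pow 2).congr_deriv ?_
  norm_num
  field_simp

lemma hasDerivAt_sinh_div_cosh_cube (lam ξ : ℝ) :
    HasDerivAt (fun ξ => -2 * lam * sinh (lam * ξ) / cosh (lam * ξ) ^ 3)
      (lam ^ 2 * (4 * sechSq lam ξ - 6 * sechSq lam ξ ^ 2)) ξ := by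
  have hc := (cosh_pos (lam * ξ)).ne'
  refine (((hasDerivAt_sinh_mul lam ξ).const_mul (-2 * lam)).fun_div
    ((hasDerivAt_cosh_mul lam ξ).fun_pow 3) (pow_ne_zero 3 hc)).congr_deriv ?_
  simp only [sechSq]
  field_simp
  linear_combination (-6 * lam ^ 2 * cosh (lam * ξ) ^ 2) * (cosh_sq_sub_sinh_sq (lam * ξ))

lemma deriv_sechSq (lam : ℝ) :
    deriv (sechSq lam) = fun ξ => -2 * lam * sinh (lam * ξ) / cosh (lam * ξ) ^ 3 :=
  funext fun ξ => (hasDerivAt_sechSq lam ξ).deriv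

lemma iteratedDeriv_two_sechSq (lam : ℝ) :
    iteratedDeriv 2 (sechSq lam) =
      fun ξ => lam ^ 2 * (4 * sechSq lam ξ - 6 * sechSq lam ξ ^ 2) := by
  rw [iteratedDeriv_succ, iteratedDeriv_one, deriv_sechSq]
  exact funext fun ξ => (hasDerivAt_sinh_div_cosh_cube lam ξ).deriv

lemma iteratedDeriv_three_sechSq (lam ξ : ℝ) :
    iteratedDeriv 3 (sechSq lam) ξ = lam ^ 2 * (4 - 12 * sechSq lam ξ) * deriv (sechSq lam) ξ := by
  have hs := hasDerivAt_sechSq lam ξ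
  rw [iteratedDeriv_succ, iteratedDeriv_two_sechSq, hs.deriv]
  refine ((((hs.const_mul 4).sub ((hs.fun_pow 2).const_mul 6)).const_mul (lam ^ 2)).deriv).trans ?_
  ring

lemma iteratedDeriv_of_eq_const_add_const_mul {n : ℕ} (hn : 0 < n) {u v : ℝ → ℝ} {α β : ℝ}
    (hu : ∀ x, u x = α + β * v x) (x : ℝ) : iteratedDeriv n u x = β * iteratedDeriv n v x := by
  rw [funext hu, iteratedDeriv_const_add hn, iteratedDeriv_const_mul_field]

def SolvesKdVBBMSystem (a0 c mu0 mu1 b σ B ω : ℝ) (f g : ℝ → ℝ) : Prop :=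
  ∀ ξ,
    (deriv f ξ * g ξ + f ξ * deriv g ξ + a0 * iteratedDeriv 3 f ξ
      + (mu0 - σ - 3*a0*B^2 - 2*b*B) * deriv f ξ = 0) ∧
    ((B + mu1) * f ξ * g ξ + (3*a0*B + b) * iteratedDeriv 2 f ξ
      + (ω + B*mu0 - B*σ - a0*B^3 - b*B^2) * f ξ = 0) ∧
    (f ξ * deriv f ξ + g ξ * deriv g ξ + (c*σ) * iteratedDeriv 3 g ξ + (1 - σ) * deriv g ξ = 0)

theorem solvesKdVBBMSystem_sechSq {a0 c mu0 mu1 b σ B ω lam d2 h0 h2 : ℝ}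
    (h_h2 : h2 = 6 * a0 * lam ^ 2)
    (h_h0 : h0 + 4 * a0 * lam ^ 2 + (mu0 - σ - 3 * a0 * B ^ 2 - 2 * b * B) = 0)
    (h_B : 3 * a0 * B + b = a0 * (B + mu1))
    (h_ω : (B + mu1) * (h0 + 4 * a0 * lam ^ 2)
      + (ω + B * mu0 - B * σ - a0 * B ^ 3 - b * B ^ 2) = 0)
    (h_d2 : d2 ^ 2 + h2 ^ 2 = 12 * c * σ * h2 * lam ^ 2)
    (h_σ : h0 + 4 * c * σ * lam ^ 2 + 1 - σ = 0)
    {f g : ℝ → ℝ} (hf : ∀ ξ, f ξ = d2 * sechSq lam ξ) (hg : ∀ ξ, g ξ = h0 + h2 * sechSq lam ξ) :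
    SolvesKdVBBMSystem a0 c mu0 mu1 b σ B ω f g := by
  intro ξ
  have hf0 : ∀ ξ, f ξ = 0 + d2 * sechSq lam ξ := fun ξ => by rw [hf, zero_add]
  have hf' (n : ℕ) (hn : 0 < n) := iteratedDeriv_of_eq_const_add_const_mul hn hf0 ξ
  have hg' (n : ℕ) (hn : 0 < n) := iteratedDeriv_of_eq_const_add_const_mul hn hg ξ
  rw [← iteratedDeriv_one (f := f), ← iteratedDeriv_one (f := g), hf' 1 one_pos, hg' 1 one_pos,
    hf' 2 two_pos, hf' 3 three_pos, hg' 3 three_pos, hf ξ, hg ξ, iteratedDeriv_two_sechSq,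
    iteratedDeriv_three_sechSq, iteratedDeriv_one]
  set s := sechSq lam ξ
  set s' := deriv (sechSq lam) ξ
  refine ⟨?_, ?_, ?_⟩
  · linear_combination (d2 * s') * h_h0 + (2 * d2 * s' * s) * h_h2
  · linear_combination (d2 * lam ^ 2 * (4 * s - 6 * s ^ 2)) * h_B + ((B + mu1) * d2 * s ^ 2) * h_h2
      + (d2 * s) * h_ω
  · linear_combination s * s' * h_d2 + h2 * s' * h_σ

theorem stmt_8_general
    (a0 c mu0 mu1 b : ℝ)
    (ha0 : 0 < a0) (hc : 0 < c)
    (σ : ℝ) (hσ : σ > a0/(2*c))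
    (E : ℝ) (hE : E = 3*a0^2*mu1^2 - 2*a0*b*mu1 - 4*a0*mu0 - b^2 + 4*a0) (hEsgn : E * (a0 - c*σ) > 0)
    (B ω lam d2 h2 h0 : ℝ)
    (h_B : B = (a0*mu1 - b)/(2*a0))
    (h_ω : ω = -(a0*mu1^2 - b*mu1 - mu0 + σ)*mu1)
    (h_lam : lam = Real.sqrt (E/(16*a0*(a0 - c*σ))))
    (h_d2 : d2 = 3*Real.sqrt (2*c*σ - a0)*E/(8*Real.sqrt a0*(a0 - c*σ)))
    (h_h2 : h2 = 3*E/(8*(a0 - c*σ)))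
    (h_h0 : h0 = (6*a0^2*c*mu1^2*σ - 4*a0*b*c*mu1*σ - 8*a0*c*mu0*σ + 8*a0*c*σ^2 - 2*b^2*c*σ - 8*a0^2*σ + 8*a0^2)/(8*a0*(c*σ - a0)))
    (f g : ℝ → ℝ)
    (hfdef : ∀ ξ : ℝ, f ξ = d2 * (1/Real.cosh (lam*ξ))^2)
    (hgdef : ∀ ξ : ℝ, g ξ = h0 + h2 * (1/Real.cosh (lam*ξ))^2) :
    ∀ ξ : ℝ,
      (deriv f ξ * g ξ + f ξ * deriv g ξ + a0 * iteratedDeriv 3 f ξ + (mu0 - σ - 3*a0*B^2 - 2*b*B) * deriv f ξ = 0) ∧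
      ((B + mu1) * f ξ * g ξ + (3*a0*B + b) * iteratedDeriv 2 f ξ + (ω + B*mu0 - B*σ - a0*B^3 - b*B^2) * f ξ = 0) ∧
      (f ξ * deriv f ξ + g ξ * deriv g ξ + (c*σ) * iteratedDeriv 3 g ξ + (1 - σ) * deriv g ξ = 0) := by
  have hgap : a0 - c * σ ≠ 0 := right_ne_zero_of_mul hEsgn.ne'
  have hcσ : 0 ≤ 2 * c * σ - a0 := by
    rw [gt_iff_lt, div_lt_iff₀ (by positivity)] at hσ
    linarith
  have hlam_sq : lam ^ 2 = E / (16 * a0 * (a0 - c * σ)) := by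
    rw [h_lam, sq_sqrt]
    rw [show E / (16 * a0 * (a0 - c * σ)) = E * (a0 - c * σ) / (16 * a0 * (a0 - c * σ) ^ 2) by
      field_simp]
    positivity
  have hd2_sq : d2 ^ 2 = 9 * (2 * c * σ - a0) * E ^ 2 / (64 * a0 * (a0 - c * σ) ^ 2) := by
    rw [h_d2, div_pow, mul_pow, mul_pow, mul_pow, mul_pow, sq_sqrt hcσ, sq_sqrt ha0.le]
    ring
  have hgap' : c * σ - a0 ≠ 0 := fun h => hgap (by linarith)
  refine solvesKdVBBMSystem_sechSq ?_ ?_ ?_ ?_ ?_ ?_ hfdef hgdef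
  · rw [hlam_sq, h_h2]; field_simp; ring
  · rw [hlam_sq, h_h0, h_B, hE]; field_simp; ring
  · rw [h_B]; field_simp; ring
  · rw [hlam_sq, h_h0, h_B, h_ω, hE]; field_simp; ring
  · rw [hd2_sq, hlam_sq, h_h2]; field_simp; ring
  · rw [hlam_sq, h_h0, hE]; field_simp; ring

theorem stmt_8
    (a0 c mu0 mu1 b : ℝ)
    (ha0 : 0 < a0) (hc : 0 < c) (hmu0 : 0 < mu0) (hmu1 : 0 < mu1)
    (σ : ℝ) (hσ : σ > a0/(2*c))
    (E : ℝ) (hE : E = 3*a0^2*mu1^2 - 2*a0*b*mu1 - 4*a0*mu0 - b^2 + 4*a0) (hEsgn : E * (a0 - c*σ) > 0)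
    (B ω lam d2 h2 h0 : ℝ)
    (h_B : B = (a0*mu1 - b)/(2*a0))
    (h_ω : ω = -(a0*mu1^2 - b*mu1 - mu0 + σ)*mu1)
    (h_lam : lam = Real.sqrt (E/(16*a0*(a0 - c*σ))))
    (h_d2 : d2 = 3*Real.sqrt (2*c*σ - a0)*E/(8*Real.sqrt a0*(a0 - c*σ)))
    (h_h2 : h2 = 3*E/(8*(a0 - c*σ)))
    (h_h0 : h0 = (6*a0^2*c*mu1^2*σ - 4*a0*b*c*mu1*σ - 8*a0*c*mu0*σ + 8*a0*c*σ^2 - 2*b^2*c*σ - 8*a0^2*σ + 8*a0^2)/(8*a0*(c*σ - a0)))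
    (f g : ℝ → ℝ)
    (hfdef : ∀ ξ : ℝ, f ξ = d2 * (1/Real.cosh (lam*ξ))^2)
    (hgdef : ∀ ξ : ℝ, g ξ = h0 + h2 * (1/Real.cosh (lam*ξ))^2) :
    ∀ ξ : ℝ,
      (deriv f ξ * g ξ + f ξ * deriv g ξ + a0 * iteratedDeriv 3 f ξ + (mu0 - σ - 3*a0*B^2 - 2*b*B) * deriv f ξ = 0) ∧
      ((B + mu1) * f ξ * g ξ + (3*a0*B + b) * iteratedDeriv 2 f ξ + (ω + B*mu0 - B*σ - a0*B^3 - b*B^2) * f ξ = 0) ∧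
      (f ξ * deriv f ξ + g ξ * deriv g ξ + (c*σ) * iteratedDeriv 3 g ξ + (1 - σ) * deriv g ξ = 0) :=
  stmt_8_general a0 c mu0 mu1 b ha0 hc σ hσ E hE hEsgn B ω lam d2 h2 h0 h_B h_ω h_lam h_d2 h_h2 h_h0
    f g hfdef hgdef
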